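/- Let χ = 2ρ̌. For every subset Π_{M'} ⊆ Π, the self-pairing of ξ_{M'} satisfies (ξ_{M'} : ξ_{M'}) = Σ_{Π_M ⊆ Π_{M'}} (−v²)^{|Π_{M'}|−|Π_M|} = Σ_{Π_M ⊆ Π_{M'}} (−v²)^{|Π_M|}. -/

import Mathlib

/-
With `χ = 2ρ̌` one has `⟪α, χ⟫ = 2` for every simple root `α`: the reflection `s_α` permutes the
positive roots other than `α` and negates their pairing with `α`. So `⟪α, χ⟫` is twice the height
of `α`, whence `r₀(w)` is always empty and `r₂(w)` is the set of simple roots that `w` keeps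
positive. For `w = w₀(M)` these are exactly the simple roots outside `M` (since `w₀(M)` moves
every vector only by an element of `span M`), so `τ(w₀(M₁), w₀(M₂)) = #(M₁ ∆ M₂)`. The
self-pairing of `ξ_{M'}` then factors over the elements of `M'`, each contributing
`v² - 2v² + 1 = 1 - v²`, and both sums of the statement equal `(1 - v²)^{#M'}` by the binomial
theorem.
-/

open scoped InnerProductSpace

noncomputable section

/-- The reflection `s_α` in the hyperplane orthogonal to `α`. -/
def sRefl {V : Type*} [NormedAddCommGroup V] [InnerProductSpace ℝ V] [FiniteDimensional ℝ V]
    (α : V) : V ≃ₗᵢ[ℝ] V :=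
  Submodule.reflection (ℝ ∙ α)ᗮ

/-- `r_n(w) = {α ∈ Δ : ⟨α, χ⟩ = n and wα ∈ Δ⁺}`. -/
def rW {V : Type*} [NormedAddCommGroup V] [InnerProductSpace ℝ V]
    (Δ pos : Finset V) (χ : V) (n : ℤ) (w : V ≃ₗᵢ[ℝ] V) : Set V :=
  {α : V | α ∈ Δ ∧ ⟪α, χ⟫_ℝ = (n : ℝ) ∧ w α ∈ pos}

/-- `τ(w₁,w₂) = #(r₂(w₁) ∆ r₂(w₂)) − #(r₀(w₁) ∆ r₀(w₂))`. -/
def tau {V : Type*} [NormedAddCommGroup V] [InnerProductSpace ℝ V]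
    (Δ pos : Finset V) (χ : V) (w₁ w₂ : V ≃ₗᵢ[ℝ] V) : ℤ :=
  ((symmDiff (rW Δ pos χ 2 w₁) (rW Δ pos χ 2 w₂)).ncard : ℤ)
    - ((symmDiff (rW Δ pos χ 0 w₁) (rW Δ pos χ 0 w₂)).ncard : ℤ)

/-- The symmetric `ℚ(v)`-bilinear form on the free `ℚ(v)`-module `K` with basis `W`,
determined on basis elements by `(w₁ : w₂) = (−v)^{τ(w₁,w₂)}`. -/
def Bform {V : Type*} [NormedAddCommGroup V] [InnerProductSpace ℝ V]
    (Δ pos : Finset V) (χ : V) (W : Subgroup (V ≃ₗᵢ[ℝ] V)) :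
    (W →₀ RatFunc ℚ) →ₗ[RatFunc ℚ] (W →₀ RatFunc ℚ) →ₗ[RatFunc ℚ] RatFunc ℚ :=
  Finsupp.linearCombination (RatFunc ℚ) fun w : W =>
    Finsupp.linearCombination (RatFunc ℚ) fun w' : W =>
      (-(RatFunc.X : RatFunc ℚ)) ^ (tau Δ pos χ (w : V ≃ₗᵢ[ℝ] V) (w' : V ≃ₗᵢ[ℝ] V))

/-- `ξ_{M'} = Σ_{Π_M ⊆ Π_{M'}} v^{|Π_{M'}|−|Π_M|} · w₀(M)` in `K`. -/
def xiElt {V : Type*} [NormedAddCommGroup V] [InnerProductSpace ℝ V]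
    (W : Subgroup (V ≃ₗᵢ[ℝ] V)) (w0M : Finset V → W) (M' : Finset V) :
    W →₀ RatFunc ℚ :=
  ∑ M ∈ M'.powerset,
    Finsupp.single (w0M M) ((RatFunc.X : RatFunc ℚ) ^ (M'.card - M.card))

open Finset Submodule
open scoped symmDiff

namespace Finset

variable {ι : Type*} [DecidableEq ι]

lemma exists_eq_ite_of_sum_eq_one {s : Finset ι} {c : ι → ℕ} (h : ∑ i ∈ s, c i = 1) :
    ∃ j ∈ s, ∀ i ∈ s, c i = if i = j then 1 else 0 := by
  obtain ⟨j, hj, hcj⟩ := exists_ne_zero_of_sum_ne_zero (h ▸ one_ne_zero)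
  have hsplit := sum_erase_add s c hj
  refine ⟨j, hj, fun i hi => ?_⟩
  split_ifs with hij
  · subst hij; omega
  · exact sum_eq_zero_iff.mp (by omega) i (mem_erase.mpr ⟨hij, hi⟩)

lemma sdiff_symmDiff_sdiff {s t₁ t₂ : Finset ι} (h₁ : t₁ ⊆ s) (h₂ : t₂ ⊆ s) :
    (s \ t₁) ∆ (s \ t₂) = t₁ ∆ t₂ := by
  ext a
  have h₁a := @h₁ a
  have h₂a := @h₂ a
  simp only [mem_symmDiff, mem_sdiff]
  tauto

lemma insert_symmDiff_of_notMem {a : ι} {s t : Finset ι} (ha : a ∉ t) :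
    insert a s ∆ t = insert a (s ∆ t) := by
  ext b
  by_cases hb : b = a
  · subst hb; simp [mem_symmDiff, ha]
  · simp [mem_symmDiff, hb]

lemma insert_symmDiff_insert_of_notMem {a : ι} {s t : Finset ι} (hs : a ∉ s) (ht : a ∉ t) :
    insert a s ∆ insert a t = s ∆ t := by
  ext b
  by_cases hb : b = a
  · subst hb; simp [mem_symmDiff, hs, ht]
  · simp [mem_symmDiff, hb]

lemma sum_powerset_powerset_pow_card_sdiff_mul_pow_card_symmDiff {R : Type*} [CommRing R]
    (x : R) (s : Finset ι) :
    ∑ t₁ ∈ s.powerset, ∑ t₂ ∈ s.powerset,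
      x ^ #(s \ t₁) * x ^ #(s \ t₂) * (-x) ^ #(t₁ ∆ t₂) = (1 - x ^ 2) ^ #s := by
  induction s using Finset.induction_on with
  | empty => simp
  | insert a s ha ih =>
    have hnot : ∀ t ∈ s.powerset, a ∉ t := fun t ht h => ha (mem_powerset.mp ht h)
    have hcard : ∀ t ∈ s.powerset, #(insert a s \ t) = #(s \ t) + 1 := fun t ht => by
      rw [insert_sdiff_of_notMem _ (hnot t ht),
        card_insert_of_notMem fun h => ha (mem_sdiff.mp h).1]
    have hcard' : ∀ t, #(insert a s \ insert a t) = #(s \ t) := fun t => by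
      rw [insert_sdiff_insert, sdiff_insert_of_notMem ha]
    have hsymm : ∀ t₁ ∈ s.powerset, ∀ t₂ ∈ s.powerset, #(insert a t₁ ∆ t₂) = #(t₁ ∆ t₂) + 1 := by
      intro t₁ ht₁ t₂ ht₂
      have hmem : a ∉ t₁ ∆ t₂ := fun h => (mem_symmDiff.mp h).elim (fun h => hnot t₁ ht₁ h.1)
        (fun h => hnot t₂ ht₂ h.1)
      rw [insert_symmDiff_of_notMem (hnot t₂ ht₂), card_insert_of_notMem hmem]
    rw [sum_powerset_insert ha, card_insert_of_notMem ha, pow_succ', ← ih, mul_sum,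
      ← sum_add_distrib]
    refine sum_congr rfl fun t₁ ht₁ => ?_
    rw [sum_powerset_insert ha, sum_powerset_insert ha, mul_sum, ← sum_add_distrib,
      ← sum_add_distrib, ← sum_add_distrib]
    refine sum_congr rfl fun t₂ ht₂ => ?_
    rw [hcard t₁ ht₁, hcard t₂ ht₂, hcard', hcard',
      insert_symmDiff_insert_of_notMem (hnot t₁ ht₁) (hnot t₂ ht₂), hsymm t₁ ht₁ t₂ ht₂,
      symmDiff_comm t₁ (insert a t₂), hsymm t₂ ht₂ t₁ ht₁, symmDiff_comm t₂ t₁]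
    ring

end Finset

section Reflection

variable {V : Type*} [NormedAddCommGroup V] [InnerProductSpace ℝ V] [FiniteDimensional ℝ V]

lemma sRefl_apply (α x : V) : sRefl α x = x - (2 * ⟪x, α⟫_ℝ / ⟪α, α⟫_ℝ) • α := by
  rw [sRefl, reflection_apply, starProjection_orthogonal_val, starProjection_singleton,
    real_inner_comm α x, ← real_inner_self_eq_norm_sq]
  simp only [RCLike.ofReal_real_eq_id, id_eq]
  module

@[simp]
lemma sRefl_sRefl (α x : V) : sRefl α (sRefl α x) = x :=
  reflection_reflection _ x

lemma sRefl_inv (α : V) : (sRefl α)⁻¹ = sRefl α :=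
  reflection_inv

@[simp]
lemma sRefl_self (α : V) : sRefl α α = -α :=
  reflection_orthogonalComplement_singleton_eq_neg α

lemma inner_sRefl_self (α x : V) : ⟪sRefl α x, α⟫_ℝ = -⟪x, α⟫_ℝ := by
  calc ⟪sRefl α x, α⟫_ℝ = -⟪sRefl α x, sRefl α α⟫_ℝ := by rw [sRefl_self, inner_neg_right, neg_neg]
    _ = -⟪x, α⟫_ℝ := by rw [LinearIsometryEquiv.inner_map_map]

lemma mapsTo_of_mem_closure_sRefl {S : Finset V} {Δ : Set V}
    (hS : ∀ α ∈ S, Set.MapsTo (sRefl α) Δ Δ) {g : V ≃ₗᵢ[ℝ] V}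
    (hg : g ∈ Subgroup.closure {e : V ≃ₗᵢ[ℝ] V | ∃ α ∈ S, e = sRefl α}) :
    Set.MapsTo g Δ Δ := by
  induction hg using Subgroup.closure_induction'' with
  | mem e he => obtain ⟨α, hα, rfl⟩ := he; exact hS α hα
  | inv_mem e he => obtain ⟨α, hα, rfl⟩ := he; rw [sRefl_inv]; exact hS α hα
  | one => exact Set.mapsTo_id Δ
  | mul g h _ _ hg hh => rw [LinearIsometryEquiv.coe_mul]; exact hg.comp hh

lemma sub_mem_span_of_mem_closure_sRefl {S : Finset V} {g : V ≃ₗᵢ[ℝ] V}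
    (hg : g ∈ Subgroup.closure {e : V ≃ₗᵢ[ℝ] V | ∃ α ∈ S, e = sRefl α}) (x : V) :
    g x - x ∈ span ℝ (S : Set V) := by
  have hgen : ∀ α ∈ S, ∀ y : V, sRefl α y - y ∈ span ℝ (S : Set V) := fun α hα y => by
    rw [sRefl_apply, sub_sub_cancel_left]
    exact neg_mem (smul_mem _ _ (subset_span hα))
  induction hg using Subgroup.closure_induction'' generalizing x with
  | mem e he => obtain ⟨α, hα, rfl⟩ := he; exact hgen α hα x
  | inv_mem e he => obtain ⟨α, hα, rfl⟩ := he; rw [sRefl_inv]; exact hgen α hα x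
  | one => simp
  | mul g h _ _ hg hh =>
    rw [LinearIsometryEquiv.coe_mul, Function.comp_apply, ← sub_add_sub_cancel _ (h x)]
    exact add_mem (hg (h x)) (hh x)

end Reflection

section PositiveRoots

variable {V : Type*} [NormedAddCommGroup V] [InnerProductSpace ℝ V] {Δ pos Pi : Finset V} {χ : V}

lemma coeff_eq_of_sum_smul_eq_smul
    (hindep : LinearIndependent ℝ (fun β : (Pi : Set V) => (β : V)))
    {α : V} (hα : α ∈ Pi) {f : V → ℝ} {t : ℝ} (h : ∑ δ ∈ Pi, f δ • δ = t • α) :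
    f α = t ∧ ∀ δ ∈ Pi, δ ≠ α → f δ = 0 := by
  classical
  have hrhs : ∑ δ ∈ Pi, (if δ = α then t else 0) • δ = t • α := by
    simp only [ite_smul, zero_smul, sum_ite_eq', if_pos hα]
  have hcoeff := (linearIndepOn_finset_iffₛ (v := id)).mp hindep f _ (h.trans hrhs.symm)
  exact ⟨by simpa using hcoeff α hα, fun δ hδ hne => by simpa [hne] using hcoeff δ hδ⟩

lemma eq_coeff_smul_of_add_eq_smul
    (hindep : LinearIndependent ℝ (fun β : (Pi : Set V) => (β : V)))
    {α β γ : V} (hα : α ∈ Pi) {b g : V → ℕ} {t : ℝ}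
    (hb : β = ∑ δ ∈ Pi, (b δ : ℝ) • δ) (hg : γ = ∑ δ ∈ Pi, (g δ : ℝ) • δ)
    (h : β + γ = t • α) : β = (b α : ℝ) • α := by
  have hsum : ∑ δ ∈ Pi, ((b δ : ℝ) + g δ) • δ = t • α := by
    simp only [add_smul, sum_add_distrib, ← hb, ← hg, h]
  have hzero := (coeff_eq_of_sum_smul_eq_smul hindep hα hsum).2
  rw [hb, sum_eq_single_of_mem α hα]
  intro δ hδ hne
  have hbδ : (b δ : ℝ) = 0 := by
    linarith [hzero δ hδ hne, (b δ).cast_nonneg (α := ℝ), (g δ).cast_nonneg (α := ℝ)]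
  rw [hbδ, zero_smul]

lemma inner_sum_smul_eq_two_mul_sum (hχ : ∀ β ∈ Pi, ⟪β, χ⟫_ℝ = 2)
    (c : V → ℝ) : ⟪∑ β ∈ Pi, c β • β, χ⟫_ℝ = 2 * ∑ β ∈ Pi, c β := by
  rw [sum_inner, mul_sum]
  exact sum_congr rfl fun β hβ => by rw [real_inner_smul_left, hχ β hβ, mul_comm]

lemma inner_chi_pos_of_mem_pos (hzero : (0 : V) ∉ Δ) (hposΔ : pos ⊆ Δ)
    (hcomb : ∀ α ∈ pos, ∃ c : V → ℕ, α = ∑ β ∈ Pi, (c β : ℝ) • β)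
    (hχ : ∀ β ∈ Pi, ⟪β, χ⟫_ℝ = 2) {α : V} (hα : α ∈ pos) : 0 < ⟪α, χ⟫_ℝ := by
  obtain ⟨c, rfl⟩ := hcomb α hα
  rw [inner_sum_smul_eq_two_mul_sum hχ]
  have hne : ∑ β ∈ Pi, (c β : ℝ) ≠ 0 := by
    intro hsum
    have hc := (sum_eq_zero_iff_of_nonneg fun β _ => (c β).cast_nonneg).mp hsum
    refine hzero (hposΔ ?_)
    rwa [sum_eq_zero fun β hβ => by rw [hc β hβ, zero_smul]] at hα
  exact mul_pos two_pos ((sum_nonneg fun β _ => (c β).cast_nonneg).lt_of_ne hne.symm)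

lemma inner_chi_neg_of_notMem_pos (hzero : (0 : V) ∉ Δ) (hposΔ : pos ⊆ Δ)
    (hpart : ∀ α ∈ Δ, (α ∈ pos ↔ -α ∉ pos))
    (hcomb : ∀ α ∈ pos, ∃ c : V → ℕ, α = ∑ β ∈ Pi, (c β : ℝ) • β)
    (hχ : ∀ β ∈ Pi, ⟪β, χ⟫_ℝ = 2) {α : V} (hα : α ∈ Δ) (hαpos : α ∉ pos) : ⟪α, χ⟫_ℝ < 0 := by
  have hneg : -α ∈ pos := by_contra fun h => hαpos ((hpart α hα).mpr h)
  have hpos := inner_chi_pos_of_mem_pos hzero hposΔ hcomb hχ hneg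
  rwa [inner_neg_left, neg_pos] at hpos

lemma inner_chi_ne_zero (hzero : (0 : V) ∉ Δ) (hposΔ : pos ⊆ Δ)
    (hpart : ∀ α ∈ Δ, (α ∈ pos ↔ -α ∉ pos))
    (hcomb : ∀ α ∈ pos, ∃ c : V → ℕ, α = ∑ β ∈ Pi, (c β : ℝ) • β)
    (hχ : ∀ β ∈ Pi, ⟪β, χ⟫_ℝ = 2) {α : V} (hα : α ∈ Δ) : ⟪α, χ⟫_ℝ ≠ 0 := by
  by_cases hαpos : α ∈ pos
  · exact (inner_chi_pos_of_mem_pos hzero hposΔ hcomb hχ hαpos).ne'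
  · exact (inner_chi_neg_of_notMem_pos hzero hposΔ hpart hcomb hχ hα hαpos).ne

lemma inner_chi_eq_two_iff (hzero : (0 : V) ∉ Δ) (hposΔ : pos ⊆ Δ)
    (hpart : ∀ α ∈ Δ, (α ∈ pos ↔ -α ∉ pos))
    (hcomb : ∀ α ∈ pos, ∃ c : V → ℕ, α = ∑ β ∈ Pi, (c β : ℝ) • β)
    (hχ : ∀ β ∈ Pi, ⟪β, χ⟫_ℝ = 2) {α : V} (hα : α ∈ Δ) : ⟪α, χ⟫_ℝ = 2 ↔ α ∈ Pi := by
  classical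
  refine ⟨fun h2 => ?_, hχ α⟩
  have hαpos : α ∈ pos := by
    by_contra hαpos
    linarith [inner_chi_neg_of_notMem_pos hzero hposΔ hpart hcomb hχ hα hαpos]
  obtain ⟨c, rfl⟩ := hcomb α hαpos
  rw [inner_sum_smul_eq_two_mul_sum hχ] at h2
  have hsum : ∑ β ∈ Pi, c β = 1 := by exact_mod_cast (by linarith : ∑ β ∈ Pi, (c β : ℝ) = 1)
  obtain ⟨j, hj, hc⟩ := exists_eq_ite_of_sum_eq_one hsum
  rw [sum_congr rfl fun β hβ => by rw [hc β hβ]]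
  simp [ite_smul, sum_ite_eq', hj]

lemma mem_pos_of_sub_mem_span (hpart : ∀ α ∈ Δ, (α ∈ pos ↔ -α ∉ pos))
    (hindep : LinearIndependent ℝ (fun β : (Pi : Set V) => (β : V)))
    (hcomb : ∀ α ∈ pos, ∃ c : V → ℕ, α = ∑ β ∈ Pi, (c β : ℝ) • β)
    {M : Finset V} (hM : M ⊆ Pi) {α γ : V} (hα : α ∈ Pi) (hαM : α ∉ M) (hγ : γ ∈ Δ)
    (hγα : γ - α ∈ span ℝ (M : Set V)) : γ ∈ pos := by
  by_contra hγpos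
  have hneg : -γ ∈ pos := by_contra fun h => hγpos ((hpart γ hγ).mpr h)
  obtain ⟨c, hc⟩ := hcomb _ hneg
  obtain ⟨d, hdM, hd⟩ := mem_span_finset.mp hγα
  have hdout : ∀ δ ∉ M, d δ = 0 := fun δ hδ => Function.notMem_support.mp fun h => hδ (hdM h)
  have hdPi : ∑ δ ∈ Pi, d δ • δ = γ - α := by
    rw [← hd]
    exact (sum_subset hM fun δ _ hδ => by rw [hdout δ hδ, zero_smul]).symm
  -- the coefficient of `α` in `-α = -γ + (γ - α)` would be `c α + 0 ≥ 0`
  have hsum : ∑ δ ∈ Pi, ((c δ : ℝ) + d δ) • δ = (-1 : ℝ) • α := by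
    rw [sum_congr rfl fun δ _ => add_smul _ _ _, sum_add_distrib, ← hc, hdPi]
    module
  have hcoeff := (coeff_eq_of_sum_smul_eq_smul hindep hα hsum).1
  rw [hdout α hαM] at hcoeff
  linarith [(c α).cast_nonneg (α := ℝ)]

end PositiveRoots

section SimpleReflections

variable {V : Type*} [NormedAddCommGroup V] [InnerProductSpace ℝ V] [FiniteDimensional ℝ V]
  {Δ pos Pi : Finset V}

lemma sRefl_mem_pos (hposΔ : pos ⊆ Δ) (hpart : ∀ α ∈ Δ, (α ∈ pos ↔ -α ∉ pos))
    (hPipos : Pi ⊆ pos) (hindep : LinearIndependent ℝ (fun β : (Pi : Set V) => (β : V)))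
    (hcomb : ∀ α ∈ pos, ∃ c : V → ℕ, α = ∑ β ∈ Pi, (c β : ℝ) • β)
    (hred : ∀ α ∈ Δ, ∀ t : ℝ, t • α ∈ Δ → t = 1 ∨ t = -1)
    (hrefl : ∀ α ∈ Δ, ∀ β ∈ Δ, sRefl α β ∈ Δ)
    {α β : V} (hα : α ∈ Pi) (hβ : β ∈ pos) (hne : β ≠ α) : sRefl α β ∈ pos := by
  have hαΔ := hposΔ (hPipos hα)
  by_contra hneg
  have hγ : -sRefl α β ∈ pos :=
    by_contra fun h => hneg ((hpart _ (hrefl α hαΔ β (hposΔ hβ))).mpr h)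
  obtain ⟨b, hb⟩ := hcomb β hβ
  obtain ⟨g, hg⟩ := hcomb _ hγ
  -- `β` and `-s_α β` are positive and sum to a multiple of `α`, so both are multiples of `α`
  have hβα : β = (b α : ℝ) • α :=
    eq_coeff_smul_of_add_eq_smul hindep hα hb hg (by rw [sRefl_apply]; abel)
  rcases hred α hαΔ (b α) (hβα ▸ hposΔ hβ) with h1 | h1
  · exact hne (by rw [hβα, h1, one_smul])
  · linarith [(b α).cast_nonneg (α := ℝ)]

lemma inner_chi_eq_two_of_mem_simple (hzero : (0 : V) ∉ Δ) (hposΔ : pos ⊆ Δ)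
    (hpart : ∀ α ∈ Δ, (α ∈ pos ↔ -α ∉ pos)) (hPipos : Pi ⊆ pos)
    (hindep : LinearIndependent ℝ (fun β : (Pi : Set V) => (β : V)))
    (hcomb : ∀ α ∈ pos, ∃ c : V → ℕ, α = ∑ β ∈ Pi, (c β : ℝ) • β)
    (hred : ∀ α ∈ Δ, ∀ t : ℝ, t • α ∈ Δ → t = 1 ∨ t = -1)
    (hrefl : ∀ α ∈ Δ, ∀ β ∈ Δ, sRefl α β ∈ Δ)
    {χ : V} (hchi : χ = ∑ β ∈ pos, ((2 : ℝ) / ⟪β, β⟫_ℝ) • β) {α : V} (hα : α ∈ Pi) :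
    ⟪α, χ⟫_ℝ = 2 := by
  classical
  have hαpos := hPipos hα
  have hαα : ⟪α, α⟫_ℝ ≠ 0 :=
    inner_self_ne_zero.mpr fun h => hzero (h ▸ hposΔ hαpos)
  -- `s_α` permutes `pos.erase α` and changes the sign of each summand
  have hmaps : ∀ β ∈ pos.erase α, sRefl α β ∈ pos.erase α := by
    intro β hβ
    obtain ⟨hne, hβpos⟩ := mem_erase.mp hβ
    refine mem_erase.mpr ⟨fun h => ?_,
      sRefl_mem_pos hposΔ hpart hPipos hindep hcomb hred hrefl hα hβpos hne⟩
    rw [← sRefl_sRefl α β, h, sRefl_self] at hβpos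
    exact (hpart α (hposΔ hαpos)).mp hαpos hβpos
  have hodd : ∀ β, ⟪((2 : ℝ) / ⟪sRefl α β, sRefl α β⟫_ℝ) • sRefl α β, α⟫_ℝ
      = -⟪((2 : ℝ) / ⟪β, β⟫_ℝ) • β, α⟫_ℝ := fun β => by
    rw [real_inner_smul_left, real_inner_smul_left, LinearIsometryEquiv.inner_map_map,
      inner_sRefl_self, mul_neg]
  have hrest : ∑ β ∈ pos.erase α, ⟪((2 : ℝ) / ⟪β, β⟫_ℝ) • β, α⟫_ℝ = 0 := by
    have h := sum_nbij' (sRefl α) (sRefl α) hmaps hmaps (fun β _ => sRefl_sRefl α β)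
      (fun β _ => sRefl_sRefl α β)
      (g := fun β => -⟪((2 : ℝ) / ⟪β, β⟫_ℝ) • β, α⟫_ℝ) fun β _ => by rw [hodd, neg_neg]
    rw [sum_neg_distrib] at h
    linarith
  rw [real_inner_comm, hchi, sum_inner, ← add_sum_erase _ _ hαpos, hrest, add_zero,
    real_inner_smul_left, div_mul_cancel₀ _ hαα]

lemma apply_mem_pos_iff_notMem (hposΔ : pos ⊆ Δ) (hpart : ∀ α ∈ Δ, (α ∈ pos ↔ -α ∉ pos))
    (hPipos : Pi ⊆ pos) (hindep : LinearIndependent ℝ (fun β : (Pi : Set V) => (β : V)))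
    (hcomb : ∀ α ∈ pos, ∃ c : V → ℕ, α = ∑ β ∈ Pi, (c β : ℝ) • β)
    (hrefl : ∀ α ∈ Δ, ∀ β ∈ Δ, sRefl α β ∈ Δ) {M : Finset V} (hM : M ⊆ Pi)
    {w : V ≃ₗᵢ[ℝ] V} (hwM : w ∈ Subgroup.closure {e : V ≃ₗᵢ[ℝ] V | ∃ α ∈ M, e = sRefl α})
    (hwneg : ∀ α ∈ Δ, α ∈ span ℝ (M : Set V) → α ∈ pos → -(w α) ∈ pos)
    {α : V} (hα : α ∈ Pi) : w α ∈ pos ↔ α ∉ M := by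
  have hαΔ := hposΔ (hPipos hα)
  have hwΔ : w α ∈ Δ := mapsTo_of_mem_closure_sRefl
    (fun β hβ _ hx => hrefl β (hposΔ (hPipos (hM hβ))) _ hx) hwM hαΔ
  refine ⟨fun hwα hαM => (hpart _ hwΔ).mp hwα (hwneg α hαΔ (subset_span hαM) (hPipos hα)),
    fun hαM => ?_⟩
  exact mem_pos_of_sub_mem_span hpart hindep hcomb hM hα hαM hwΔ
    (sub_mem_span_of_mem_closure_sRefl hwM α)

end SimpleReflections

section Pairing

variable {V : Type*} [NormedAddCommGroup V] [InnerProductSpace ℝ V] {Δ pos Pi : Finset V} {χ : V}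

lemma rW_zero_eq_empty (h0 : ∀ α ∈ Δ, ⟪α, χ⟫_ℝ ≠ 0) (w : V ≃ₗᵢ[ℝ] V) :
    rW Δ pos χ 0 w = ∅ :=
  Set.eq_empty_of_forall_notMem fun α ⟨hα, hα0, _⟩ => h0 α hα (by exact_mod_cast hα0)

lemma rW_two_eq_sdiff [DecidableEq V] (h2 : ∀ α ∈ Δ, (⟪α, χ⟫_ℝ = 2 ↔ α ∈ Pi)) (hPiΔ : Pi ⊆ Δ)
    {M : Finset V} {w : V ≃ₗᵢ[ℝ] V} (hw : ∀ α ∈ Pi, (w α ∈ pos ↔ α ∉ M)) :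
    rW Δ pos χ 2 w = ↑(Pi \ M) := by
  ext α
  simp only [rW, Set.mem_ofPred_eq, coe_sdiff, Set.mem_sdiff, mem_coe, Int.cast_ofNat]
  constructor
  · rintro ⟨hαΔ, hα2, hwα⟩
    have hα := (h2 α hαΔ).mp hα2
    exact ⟨hα, (hw α hα).mp hwα⟩
  · rintro ⟨hα, hαM⟩
    exact ⟨hPiΔ hα, (h2 α (hPiΔ hα)).mpr hα, (hw α hα).mpr hαM⟩

lemma tau_eq_card_symmDiff [DecidableEq V] (h0 : ∀ α ∈ Δ, ⟪α, χ⟫_ℝ ≠ 0) {M₁ M₂ : Finset V}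
    (hM₁ : M₁ ⊆ Pi) (hM₂ : M₂ ⊆ Pi) {w₁ w₂ : V ≃ₗᵢ[ℝ] V} (h₁ : rW Δ pos χ 2 w₁ = ↑(Pi \ M₁))
    (h₂ : rW Δ pos χ 2 w₂ = ↑(Pi \ M₂)) : tau Δ pos χ w₁ w₂ = #(M₁ ∆ M₂) := by
  rw [tau, rW_zero_eq_empty h0, rW_zero_eq_empty h0, h₁, h₂, symmDiff_self, ← coe_symmDiff,
    sdiff_symmDiff_sdiff hM₁ hM₂, Set.ncard_coe_finset]
  simp

variable {W : Subgroup (V ≃ₗᵢ[ℝ] V)}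

lemma Bform_single_single (w₁ w₂ : W) (a b : RatFunc ℚ) :
    Bform Δ pos χ W (Finsupp.single w₁ a) (Finsupp.single w₂ b)
      = a * b * (-RatFunc.X) ^ tau Δ pos χ (w₁ : V ≃ₗᵢ[ℝ] V) (w₂ : V ≃ₗᵢ[ℝ] V) := by
  simp only [Bform, Finsupp.linearCombination_single, LinearMap.smul_apply, smul_eq_mul]
  ring

lemma Bform_xiElt_self [DecidableEq V] (w0M : Finset V → W) {M' : Finset V}
    (hτ : ∀ M₁ ⊆ M', ∀ M₂ ⊆ M',
      tau Δ pos χ (w0M M₁ : V ≃ₗᵢ[ℝ] V) (w0M M₂ : V ≃ₗᵢ[ℝ] V) = #(M₁ ∆ M₂)) :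
    Bform Δ pos χ W (xiElt W w0M M') (xiElt W w0M M') = (1 - RatFunc.X ^ 2) ^ #M' := by
  rw [← sum_powerset_powerset_pow_card_sdiff_mul_pow_card_symmDiff]
  simp only [xiElt, map_sum, LinearMap.coe_sum, Finset.sum_apply, Bform_single_single]
  refine sum_congr rfl fun M₁ h₁ => sum_congr rfl fun M₂ h₂ => ?_
  rw [mem_powerset] at h₁ h₂
  rw [hτ M₂ h₂ M₁ h₁, zpow_natCast, symmDiff_comm, card_sdiff_of_subset h₁,
    card_sdiff_of_subset h₂]
  ring

end Pairing

theorem stmt10_general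
    {V : Type*} [NormedAddCommGroup V] [InnerProductSpace ℝ V] [FiniteDimensional ℝ V]
    (Δ pos Pi : Finset V) (χ : V)
    -- root system axioms: finite (a `Finset`), spanning, reduced, crystallographic,
    -- stable under negation and under the reflections `s_α`
    (hzero : (0 : V) ∉ Δ)
    (hred : ∀ α ∈ Δ, ∀ t : ℝ, t • α ∈ Δ → t = 1 ∨ t = -1)
    (hrefl : ∀ α ∈ Δ, ∀ β ∈ Δ, sRefl α β ∈ Δ)
    -- positive roots and simple roots
    (hposΔ : pos ⊆ Δ)
    (hpart : ∀ α ∈ Δ, (α ∈ pos ↔ -α ∉ pos))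
    (hPipos : Pi ⊆ pos)
    (hindep : LinearIndependent ℝ (fun β : (Pi : Set V) => (β : V)))
    (hcomb : ∀ α ∈ pos, ∃ c : V → ℕ, α = ∑ β ∈ Pi, (c β : ℝ) • β)
    -- the Weyl group, generated by the reflections in the roots
    (W : Subgroup (V ≃ₗᵢ[ℝ] V))
    -- `χ = 2ρ̌` is the sum of the positive coroots `β̌ = 2β/(β,β)`
    (hchi : χ = ∑ β ∈ pos, ((2 : ℝ) / ⟪β, β⟫_ℝ) • β)
    -- for each `Π_M ⊆ Π`, `w₀(M) ∈ W` is the element of the subgroup `W_M` generated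
    -- by the reflections in `Π_M` mapping every positive root in `Δ ∩ span Π_M` to a
    -- negative root
    (w0M : Finset V → W)
    (hw0MW : ∀ M, M ⊆ Pi →
      (w0M M : V ≃ₗᵢ[ℝ] V) ∈ Subgroup.closure {e : V ≃ₗᵢ[ℝ] V | ∃ α ∈ M, e = sRefl α})
    (hw0Mneg : ∀ M, M ⊆ Pi → ∀ α ∈ Δ,
      α ∈ Submodule.span ℝ (M : Set V) → α ∈ pos → -((w0M M : V ≃ₗᵢ[ℝ] V) α) ∈ pos)
    :
    ∀ M', M' ⊆ Pi →
      Bform Δ pos χ W (xiElt W w0M M') (xiElt W w0M M')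
          = ∑ M ∈ M'.powerset, (-(RatFunc.X ^ 2) : RatFunc ℚ) ^ (M'.card - M.card) ∧
      Bform Δ pos χ W (xiElt W w0M M') (xiElt W w0M M')
          = ∑ M ∈ M'.powerset, (-(RatFunc.X ^ 2) : RatFunc ℚ) ^ M.card := by
  classical
  intro M' hM'
  have hχ : ∀ β ∈ Pi, ⟪β, χ⟫_ℝ = 2 := fun β hβ =>
    inner_chi_eq_two_of_mem_simple hzero hposΔ hpart hPipos hindep hcomb hred hrefl hchi hβ
  have hr₂ : ∀ M ⊆ Pi, rW Δ pos χ 2 (w0M M) = ↑(Pi \ M) := fun M hM =>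
    rW_two_eq_sdiff (fun α hα => inner_chi_eq_two_iff hzero hposΔ hpart hcomb hχ hα)
      (hPipos.trans hposΔ) fun α hα =>
        apply_mem_pos_iff_notMem hposΔ hpart hPipos hindep hcomb hrefl hM (hw0MW M hM)
          (hw0Mneg M hM) hα
  have hξ : Bform Δ pos χ W (xiElt W w0M M') (xiElt W w0M M') = (1 - RatFunc.X ^ 2) ^ #M' :=
    Bform_xiElt_self w0M fun M₁ h₁ M₂ h₂ =>
      tau_eq_card_symmDiff (fun α hα => inner_chi_ne_zero hzero hposΔ hpart hcomb hχ hα)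
        (h₁.trans hM') (h₂.trans hM') (hr₂ M₁ (h₁.trans hM')) (hr₂ M₂ (h₂.trans hM'))
  constructor
  · rw [hξ, sub_eq_add_neg, ← sum_pow_mul_eq_add_pow]
    simp
  · rw [hξ, sub_eq_add_neg, add_comm, ← sum_pow_mul_eq_add_pow]
    simp

theorem stmt10
    {V : Type*} [NormedAddCommGroup V] [InnerProductSpace ℝ V] [FiniteDimensional ℝ V]
    (Δ pos Pi : Finset V) (χ : V)
    -- root system axioms: finite (a `Finset`), spanning, reduced, crystallographic,
    -- stable under negation and under the reflections `s_α`
    (hspan : Submodule.span ℝ (Δ : Set V) = ⊤)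
    (hzero : (0 : V) ∉ Δ)
    (hsym : ∀ α ∈ Δ, -α ∈ Δ)
    (hred : ∀ α ∈ Δ, ∀ t : ℝ, t • α ∈ Δ → t = 1 ∨ t = -1)
    (hcrys : ∀ α ∈ Δ, ∀ β ∈ Δ, ∃ n : ℤ, 2 * ⟪β, α⟫_ℝ / ⟪α, α⟫_ℝ = (n : ℝ))
    (hrefl : ∀ α ∈ Δ, ∀ β ∈ Δ, sRefl α β ∈ Δ)
    -- positive roots and simple roots
    (hposΔ : pos ⊆ Δ)
    (hpart : ∀ α ∈ Δ, (α ∈ pos ↔ -α ∉ pos))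
    (hPipos : Pi ⊆ pos)
    (hindep : LinearIndependent ℝ (fun β : (Pi : Set V) => (β : V)))
    (hcomb : ∀ α ∈ pos, ∃ c : V → ℕ, α = ∑ β ∈ Pi, (c β : ℝ) • β)
    -- the Weyl group, generated by the reflections in the roots
    (W : Subgroup (V ≃ₗᵢ[ℝ] V))
    (hW : W = Subgroup.closure {e : V ≃ₗᵢ[ℝ] V | ∃ α ∈ Δ, e = sRefl α})
    -- `χ = 2ρ̌` is the sum of the positive coroots `β̌ = 2β/(β,β)`
    (hchi : χ = ∑ β ∈ pos, ((2 : ℝ) / ⟪β, β⟫_ℝ) • β)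
    -- for each `Π_M ⊆ Π`, `w₀(M) ∈ W` is the element of the subgroup `W_M` generated
    -- by the reflections in `Π_M` mapping every positive root in `Δ ∩ span Π_M` to a
    -- negative root
    (w0M : Finset V → W)
    (hw0MW : ∀ M, M ⊆ Pi →
      (w0M M : V ≃ₗᵢ[ℝ] V) ∈ Subgroup.closure {e : V ≃ₗᵢ[ℝ] V | ∃ α ∈ M, e = sRefl α})
    (hw0Mneg : ∀ M, M ⊆ Pi → ∀ α ∈ Δ,
      α ∈ Submodule.span ℝ (M : Set V) → α ∈ pos → -((w0M M : V ≃ₗᵢ[ℝ] V) α) ∈ pos)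
    :
    ∀ M', M' ⊆ Pi →
      Bform Δ pos χ W (xiElt W w0M M') (xiElt W w0M M')
          = ∑ M ∈ M'.powerset, (-(RatFunc.X ^ 2) : RatFunc ℚ) ^ (M'.card - M.card) ∧
      Bform Δ pos χ W (xiElt W w0M M') (xiElt W w0M M')
          = ∑ M ∈ M'.powerset, (-(RatFunc.X ^ 2) : RatFunc ℚ) ^ M.card :=
  stmt10_general Δ pos Pi χ hzero hred hrefl hposΔ hpart hPipos hindep hcomb W hchi w0M hw0MW
    hw0Mneg

end
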